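/- Let q, m ∈ ℕ and let S be a subset of {0,1,…,2^q − 1} (the set of computation paths of a machine making q nondeterministic binary choices) such that either S = ∅ or |S| > 2^q/2. Let Y_1, …, Y_m be independent uniform samples from {0,1,…,2^q − 1} and define the estimator F̂ = 2^q · (#{i : Y_i ∈ S} / m). Then: (i) if S = ∅, then F̂ = 0 with probability 1; and (ii) if |S| > 2^q/2, then for every 0 < ε ≤ 1 and 0 < δ < 1, whenever m ≥ 6·log(2/δ)/ε² one has P[(1−ε)·|S| ≤ F̂ ≤ (1+ε)·|S|] ≥ 1 − δ. In particular m depends polynomially only on ε⁻¹ and log δ⁻¹, not on q. -/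

import Mathlib

open MeasureTheory ProbabilityTheory
open scoped ENNReal

lemma aux_exp_neg_le (x : ℝ) (hx : 0 ≤ x) : Real.exp (-x) ≤ 1 - x + x ^ 2 / 2 := by
  have key : ∀ y : ℝ, HasDerivAt (fun z : ℝ => 1 - z + z ^ 2 / 2 - Real.exp (-z))
      (-1 + y + Real.exp (-y)) y := by
    intro y
    have h1 : HasDerivAt (fun z : ℝ => Real.exp (-z)) (-Real.exp (-y)) y := by
      have := (Real.hasDerivAt_exp (-y)).comp y (hasDerivAt_neg y); simp at this; exact this
    have h2 : HasDerivAt (fun z : ℝ => 1 - z + z ^ 2 / 2) (-1 + y) y := by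
      have h3 : HasDerivAt (fun z : ℝ => z ^ 2) (2 * y) y := by
        simpa using hasDerivAt_pow 2 y
      have h4 := ((hasDerivAt_const y (1:ℝ)).sub (hasDerivAt_id y)).add (h3.div_const 2)
      exact h4.congr_deriv (by ring)
    have := h2.sub h1; simp at this; exact this
  have mono : MonotoneOn (fun z : ℝ => 1 - z + z ^ 2 / 2 - Real.exp (-z)) (Set.Ici 0) := by
    apply monotoneOn_of_deriv_nonneg (convex_Ici 0)
    · exact fun y _ => (key y).continuousAt.continuousWithinAt
    · exact fun y _ => (key y).differentiableAt.differentiableWithinAt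
    · intro y hy
      rw [(key y).deriv]
      have := Real.add_one_le_exp (-y)
      linarith
  have h0 := mono (Set.mem_Ici.2 le_rfl) (Set.mem_Ici.2 hx) hx
  simp only [Real.exp_zero] at h0
  norm_num at h0
  linarith

lemma aux_log_ineq (x : ℝ) (hx : 0 ≤ x) (hx1 : x ≤ 1) :
    x ^ 2 / 3 ≤ (1 + x) * Real.log (1 + x) - x := by
  have hlog23 : ∀ y : ℝ, 0 ≤ y → y ≤ 1 → 2 * y / 3 ≤ Real.log (1 + y) := by
    intro y hy hy1
    have hc := strictConcaveOn_log_Ioi.concaveOn.2 (Set.mem_Ioi.2 one_pos)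
      (Set.mem_Ioi.2 (by norm_num : (0:ℝ) < 2)) (sub_nonneg.2 hy1) hy (by ring)
    simp only [smul_eq_mul, mul_one, Real.log_one, mul_zero, zero_add] at hc
    have h2 : (0.6931471803 : ℝ) < Real.log 2 := Real.log_two_gt_d9
    have harg : 1 - y + y * 2 = 1 + y := by ring
    rw [harg] at hc
    nlinarith
  have key : ∀ y : ℝ, 0 < 1 + y → HasDerivAt
      (fun z : ℝ => (1 + z) * Real.log (1 + z) - z - z ^ 2 / 3)
      (Real.log (1 + y) - 2 * y / 3) y := by
    intro y hy
    have h1 : HasDerivAt (fun z : ℝ => 1 + z) 1 y := by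
      have := (hasDerivAt_const y (1:ℝ)).add (hasDerivAt_id y); simp at this; exact this
    have h2 : HasDerivAt (fun z : ℝ => Real.log (1 + z)) (1 / (1 + y)) y := by
      have := (Real.hasDerivAt_log hy.ne').comp y h1; simp at this; rw [one_div]; exact this
    have h3 := h1.mul h2
    have h4 : HasDerivAt (fun z : ℝ => z ^ 2 / 3) (2 * y / 3) y := by
      simpa using (hasDerivAt_pow 2 y).div_const 3
    have h5 := (h3.sub (hasDerivAt_id y)).sub h4
    have h6 : HasDerivAt (fun z : ℝ => (1 + z) * Real.log (1 + z) - z - z ^ 2 / 3)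
        (Real.log (1 + y) + (1 + y) * (1 + y)⁻¹ - 1 - 2 * y / 3) y := by
      have := h5; simp at this; exact this
    convert h6 using 1
    rw [mul_inv_cancel₀ hy.ne']
    ring
  have mono : MonotoneOn (fun z : ℝ => (1 + z) * Real.log (1 + z) - z - z ^ 2 / 3)
      (Set.Icc 0 1) := by
    apply monotoneOn_of_deriv_nonneg (convex_Icc 0 1)
    · intro y hy
      exact (key y (by linarith [hy.1] : (0:ℝ) < 1 + y)).continuousAt.continuousWithinAt
    · intro y hy
      rw [interior_Icc] at hy
      exact (key y (by linarith [hy.1])).differentiableAt.differentiableWithinAt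
    · intro y hy
      rw [interior_Icc] at hy
      rw [(key y (by linarith [hy.1])).deriv]
      have := hlog23 y hy.1.le hy.2.le
      linarith
  have h0 := mono (Set.mem_Icc.2 ⟨le_rfl, zero_le_one⟩) (Set.mem_Icc.2 ⟨hx, hx1⟩) hx
  simp only [Real.log_one, add_zero, mul_zero, mul_one] at h0
  norm_num at h0
  linarith


set_option maxHeartbeats 2000000 in
/-- Quantitative core of #RP1 ⊆ FPRAS: let `S` be a set of paths of a machine making `q`
binary nondeterministic choices, with either `S = ∅` or `|S| > 2^q / 2`. Sampling `m` paths
`Y_1, …, Y_m` independently and uniformly and setting `F̂ = 2^q·#{i : Y_i ∈ S}/m`, we get: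
(i) if `S = ∅` then `F̂ = 0` almost surely; (ii) if `|S| > 2^q/2` then for `0 < ε ≤ 1`,
`0 < δ < 1` and `m ≥ 6·log(2/δ)/ε²`, `F̂` is a `(1±ε)`-approximation of `|S|` with
probability at least `1 − δ`. -/
theorem sampling_paths_fpras
    (q : ℕ) (S : Finset (Fin (2 ^ q)))
    {Ω : Type*} [MeasurableSpace Ω] (μ : Measure Ω) [IsProbabilityMeasure μ]
    (m : ℕ)
    (Y : Fin m → Ω → Fin (2 ^ q))
    (hmeas : ∀ i, Measurable (Y i))
    (hindep : iIndepFun Y μ)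
    (hunif : ∀ i, ∀ y : Fin (2 ^ q), μ {ω | Y i ω = y} = 1 / (2 ^ q : ℝ≥0∞)) :
    (S = ∅ →
      μ {ω | (2 ^ q : ℝ) * (((Finset.univ.filter (fun i => Y i ω ∈ S)).card : ℝ) / m) = 0}
        = 1) ∧
    (2 * S.card > 2 ^ q →
      ∀ ε δ : ℝ, 0 < ε → ε ≤ 1 → 0 < δ → δ < 1 →
        (m : ℝ) ≥ 6 * Real.log (2 / δ) / ε ^ 2 →
        μ {ω | (1 - ε) * (S.card : ℝ) ≤
                (2 ^ q : ℝ) * (((Finset.univ.filter (fun i => Y i ω ∈ S)).card : ℝ) / m) ∧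
              (2 ^ q : ℝ) * (((Finset.univ.filter (fun i => Y i ω ∈ S)).card : ℝ) / m) ≤
                (1 + ε) * (S.card : ℝ)} ≥
          ENNReal.ofReal (1 - δ)) := by
  constructor
  · intro hS
    have : {ω | (2 ^ q : ℝ) * (((Finset.univ.filter (fun i => Y i ω ∈ S)).card : ℝ) / m) = 0}
        = Set.univ := by
      ext ω; simp [hS]
    rw [this]; exact measure_univ
  · intro hS ε δ hε hε1 hδ hδ1 hm
    classical
    -- basic numbers
    have h2q : (0:ℝ) < 2 ^ q := by positivity
    set p : ℝ := (S.card : ℝ) / 2 ^ q with hp_def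
    have hSp : (S.card : ℝ) = p * 2 ^ q := by rw [hp_def, div_mul_cancel₀ _ h2q.ne']
    have hp_half : 1 / 2 < p := by
      rw [hp_def, lt_div_iff₀ h2q]
      have : (2 ^ q : ℝ) < 2 * S.card := by exact_mod_cast hS
      linarith
    have hp1 : p ≤ 1 := by
      rw [hp_def, div_le_one h2q]
      have : S.card ≤ 2 ^ q := by
        simpa using (Finset.card_le_univ S)
      exact_mod_cast this
    have hp0 : 0 < p := by linarith
    have hL : 0 < Real.log (2 / δ) := Real.log_pos (by rw [lt_div_iff₀ hδ]; linarith)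
    have hm0 : (0:ℝ) < m := lt_of_lt_of_le (by positivity) hm
    have hmε : 6 * Real.log (2 / δ) ≤ (m:ℝ) * ε ^ 2 := by
      rw [ge_iff_le, div_le_iff₀ (by positivity)] at hm
      linarith
    -- the exponential bound used for both tails
    have hexp_bound : Real.exp (-((m:ℝ) * ε ^ 2 / 6)) ≤ δ / 2 := by
      have h1 : -((m:ℝ) * ε ^ 2 / 6) ≤ -Real.log (2 / δ) := by linarith
      calc Real.exp (-((m:ℝ) * ε ^ 2 / 6)) ≤ Real.exp (-Real.log (2 / δ)) :=
            Real.exp_le_exp.2 h1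
        _ = δ / 2 := by
            rw [← Real.log_inv, Real.exp_log (by positivity)]
            rw [inv_div]
    -- random variables
    set X : Fin m → Ω → ℝ := fun i ω => if Y i ω ∈ S then 1 else 0 with hX_def
    have hA : ∀ i, MeasurableSet {ω | Y i ω ∈ S} := by
      intro i
      exact (hmeas i) (S.finite_toSet.measurableSet)
    have hXmeas : ∀ i, Measurable (X i) := fun i =>
      Measurable.ite (hA i) measurable_const measurable_const
    have hXind : ∀ i, X i = Set.indicator {ω | Y i ω ∈ S} (fun _ => (1:ℝ)) := by
      intro i; funext ω
      simp [hX_def, Set.indicator_apply, Set.mem_setOf_eq]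
    have hXint : ∀ i, Integrable (X i) μ := by
      intro i; rw [hXind i]
      exact (integrable_const (1:ℝ)).indicator (hA i)
    have hindepX : iIndepFun X μ := by
      have := hindep.comp (fun _ => fun y : Fin (2^q) => if y ∈ S then (1:ℝ) else 0)
        (fun _ => measurable_of_countable _)
      exact this
    -- mean
    have hμA : ∀ i, μ {ω | Y i ω ∈ S} = (S.card : ℝ≥0∞) / 2 ^ q := by
      intro i
      have hset : {ω | Y i ω ∈ S} = ⋃ y ∈ S, {ω | Y i ω = y} := by
        ext ω; simp
      rw [hset, measure_biUnion_finset ?_ ?_]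
      · simp only [hunif i]
        rw [Finset.sum_const, nsmul_eq_mul, one_div, div_eq_mul_inv]
      · intro a _ b _ hab
        simp only [Set.disjoint_left, Set.mem_setOf_eq]
        intro ω ha hb; exact hab (ha ▸ hb ▸ rfl)
      · intro y _
        exact (hmeas i) (measurableSet_singleton y)
    have hμA_toReal : ∀ i, (μ {ω | Y i ω ∈ S}).toReal = p := by
      intro i
      rw [hμA i, hp_def]
      rw [ENNReal.toReal_div]
      simp
    have hEX : ∀ i, ∫ ω, X i ω ∂μ = p := by
      intro i
      rw [hXind i]
      rw [MeasureTheory.integral_indicator_const (1:ℝ) (hA i)]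
      simp [Measure.real, hμA_toReal i]
    -- exp(t * X i) rewriting
    have hXexp : ∀ i t, (fun ω => Real.exp (t * X i ω))
        = fun ω => 1 + (Real.exp t - 1) * X i ω := by
      intro i t; funext ω
      by_cases h : Y i ω ∈ S <;> simp [hX_def, h]
    have hexpint : ∀ i t, Integrable (fun ω => Real.exp (t * X i ω)) μ := by
      intro i t
      rw [hXexp i t]
      exact (integrable_const (1:ℝ)).add ((hXint i).const_mul _)
    have hmgfX : ∀ i t, mgf (X i) μ t = 1 + (Real.exp t - 1) * p := by
      intro i t
      rw [mgf, hXexp i t, integral_add (integrable_const _) ((hXint i).const_mul _),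
        MeasureTheory.integral_const_mul, hEX i]
      simp
    -- the sum
    set T : Ω → ℝ := fun ω => ((Finset.univ.filter (fun i => Y i ω ∈ S)).card : ℝ) with hT_def
    have hTsum : T = ∑ i, X i := by
      funext ω
      simp only [hT_def, Finset.sum_apply, hX_def]
      rw [Finset.sum_boole]
    have hTmeas : Measurable T := by
      rw [hTsum, show (∑ i, X i : Ω → ℝ) = fun ω => ∑ i, X i ω from
        funext fun ω => Finset.sum_apply _ _ _]
      exact Finset.measurable_sum _ (fun i _ => hXmeas i)
    have hmgfT : ∀ t, mgf T μ t = (1 + (Real.exp t - 1) * p) ^ m := by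
      intro t
      rw [hTsum, hindepX.mgf_sum hXmeas]
      simp [hmgfX, Finset.prod_const]
    have hTexpint : ∀ t, Integrable (fun ω => Real.exp (t * T ω)) μ := by
      intro t
      rw [hTsum]
      exact hindepX.integrable_exp_mul_sum hXmeas (fun i _ => hexpint i t)
    -- upper tail
    have hup : (μ {ω | (1 + ε) * ((m:ℝ) * p) ≤ T ω}).toReal ≤ δ / 2 := by
      set t : ℝ := Real.log (1 + ε) with ht_def
      have ht0 : 0 ≤ t := Real.log_nonneg (by linarith)
      have hexp_t : Real.exp t = 1 + ε := Real.exp_log (by linarith)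
      have h1 := measure_ge_le_exp_mul_mgf (μ := μ) (X := T) ((1 + ε) * ((m:ℝ) * p)) ht0
        (hTexpint t)
      rw [hmgfT t, hexp_t] at h1
      have hbase : 1 + (1 + ε - 1) * p = 1 + ε * p := by ring
      rw [hbase] at h1
      have h2 : (1 + ε * p) ^ m ≤ Real.exp ((m:ℝ) * (ε * p)) := by
        calc (1 + ε * p) ^ m ≤ Real.exp (ε * p) ^ m :=
              pow_le_pow_left₀ (by have := mul_pos hε hp0; linarith) (by linarith [Real.add_one_le_exp (ε * p)]) m
          _ = Real.exp ((m:ℝ) * (ε * p)) := by rw [← Real.exp_nat_mul]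
      have h3 : Real.exp (-t * ((1 + ε) * ((m:ℝ) * p))) * (1 + ε * p) ^ m
          ≤ Real.exp (-((m:ℝ) * ε ^ 2 / 6)) := by
        calc Real.exp (-t * ((1 + ε) * ((m:ℝ) * p))) * (1 + ε * p) ^ m
            ≤ Real.exp (-t * ((1 + ε) * ((m:ℝ) * p))) * Real.exp ((m:ℝ) * (ε * p)) := by
              exact mul_le_mul_of_nonneg_left h2 (Real.exp_pos _).le
          _ = Real.exp ((m:ℝ) * p * (ε - (1 + ε) * t)) := by
              rw [← Real.exp_add]; congr 1; ring
          _ ≤ Real.exp (-((m:ℝ) * ε ^ 2 / 6)) := by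
              apply Real.exp_le_exp.2
              have haux := aux_log_ineq ε hε.le hε1
              rw [← ht_def] at haux
              have hpA : ε ^ 2 / 6 ≤ p * ((1 + ε) * t - ε) := by nlinarith
              have := mul_le_mul_of_nonneg_left hpA hm0.le
              nlinarith
      calc (μ {ω | (1 + ε) * ((m:ℝ) * p) ≤ T ω}).toReal
          ≤ Real.exp (-t * ((1 + ε) * ((m:ℝ) * p))) * (1 + ε * p) ^ m := h1
        _ ≤ Real.exp (-((m:ℝ) * ε ^ 2 / 6)) := h3
        _ ≤ δ / 2 := hexp_bound
    -- lower tail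
    have hlo : (μ {ω | T ω ≤ (1 - ε) * ((m:ℝ) * p)}).toReal ≤ δ / 2 := by
      have h1 := measure_le_le_exp_mul_mgf (μ := μ) (X := T) ((1 - ε) * ((m:ℝ) * p))
        (neg_nonpos.2 hε.le) (hTexpint (-ε))
      rw [hmgfT (-ε)] at h1
      have hbase0 : 0 ≤ 1 + (Real.exp (-ε) - 1) * p := by
        nlinarith [Real.exp_pos (-ε)]
      have h2 : (1 + (Real.exp (-ε) - 1) * p) ^ m
          ≤ Real.exp ((m:ℝ) * ((Real.exp (-ε) - 1) * p)) := by
        calc (1 + (Real.exp (-ε) - 1) * p) ^ m ≤ Real.exp ((Real.exp (-ε) - 1) * p) ^ m :=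
              pow_le_pow_left₀ hbase0
                (by linarith [Real.add_one_le_exp ((Real.exp (-ε) - 1) * p)]) m
          _ = _ := by rw [← Real.exp_nat_mul]
      have h3 : Real.exp (-(-ε) * ((1 - ε) * ((m:ℝ) * p)))
            * (1 + (Real.exp (-ε) - 1) * p) ^ m
          ≤ Real.exp (-((m:ℝ) * ε ^ 2 / 6)) := by
        calc Real.exp (-(-ε) * ((1 - ε) * ((m:ℝ) * p)))
              * (1 + (Real.exp (-ε) - 1) * p) ^ m
            ≤ Real.exp (-(-ε) * ((1 - ε) * ((m:ℝ) * p)))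
              * Real.exp ((m:ℝ) * ((Real.exp (-ε) - 1) * p)) :=
              mul_le_mul_of_nonneg_left h2 (Real.exp_pos _).le
          _ = Real.exp ((m:ℝ) * p * (ε * (1 - ε) + Real.exp (-ε) - 1)) := by
              rw [← Real.exp_add]; congr 1; ring
          _ ≤ Real.exp (-((m:ℝ) * ε ^ 2 / 6)) := by
              apply Real.exp_le_exp.2
              have haux := aux_exp_neg_le ε hε.le
              have hpA : ε * (1 - ε) + Real.exp (-ε) - 1 ≤ -(ε ^ 2 / 2) := by nlinarith
              have hpB : p * (ε ^ 2 / 2) ≥ ε ^ 2 / 6 := by nlinarith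
              have h6 : (m:ℝ) * p * (ε * (1 - ε) + Real.exp (-ε) - 1)
                  ≤ (m:ℝ) * p * (-(ε ^ 2 / 2)) := by
                apply mul_le_mul_of_nonneg_left hpA
                exact mul_nonneg hm0.le hp0.le
              have h7 := mul_le_mul_of_nonneg_left hpB hm0.le
              nlinarith
      calc (μ {ω | T ω ≤ (1 - ε) * ((m:ℝ) * p)}).toReal
          ≤ _ := h1
        _ ≤ Real.exp (-((m:ℝ) * ε ^ 2 / 6)) := h3
        _ ≤ δ / 2 := hexp_bound
    -- rewrite the target event
    have hsetE : {ω | (1 - ε) * (S.card : ℝ) ≤ (2 ^ q : ℝ) * (T ω / m) ∧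
          (2 ^ q : ℝ) * (T ω / m) ≤ (1 + ε) * (S.card : ℝ)}
        = {ω | (1 - ε) * ((m:ℝ) * p) ≤ T ω ∧ T ω ≤ (1 + ε) * ((m:ℝ) * p)} := by
      ext ω
      simp only [Set.mem_setOf_eq]
      rw [hSp]
      constructor
      · rintro ⟨h1, h2⟩
        rw [show (1-ε) * (p * 2^q) = 2^q * ((1-ε) * p) by ring, mul_le_mul_iff_of_pos_left h2q,
          le_div_iff₀ hm0] at h1
        rw [show (1+ε) * (p * 2^q) = 2^q * ((1+ε) * p) by ring, mul_le_mul_iff_of_pos_left h2q,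
          div_le_iff₀ hm0] at h2
        exact ⟨by linarith [h1], by linarith [h2]⟩
      · rintro ⟨h1, h2⟩
        constructor
        · rw [show (1-ε) * (p * 2^q) = 2^q * ((1-ε) * p) by ring, mul_le_mul_iff_of_pos_left h2q,
            le_div_iff₀ hm0]
          linarith
        · rw [show (1+ε) * (p * 2^q) = 2^q * ((1+ε) * p) by ring, mul_le_mul_iff_of_pos_left h2q,
            div_le_iff₀ hm0]
          linarith
    set E : Set Ω := {ω | (1 - ε) * ((m:ℝ) * p) ≤ T ω ∧ T ω ≤ (1 + ε) * ((m:ℝ) * p)}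
      with hE_def
    have hEmeas : MeasurableSet E :=
      (measurableSet_le measurable_const hTmeas).inter (measurableSet_le hTmeas measurable_const)
    have hcompl : Eᶜ ⊆ {ω | T ω ≤ (1 - ε) * ((m:ℝ) * p)} ∪ {ω | (1 + ε) * ((m:ℝ) * p) ≤ T ω} := by
      intro ω hω
      simp only [hE_def, Set.mem_compl_iff, Set.mem_setOf_eq, not_and_or, not_le] at hω
      rcases hω with h | h
      · exact Or.inl (le_of_lt h)
      · exact Or.inr (le_of_lt h)
    have hμcompl : μ Eᶜ ≤ ENNReal.ofReal δ := by
      calc μ Eᶜ ≤ μ ({ω | T ω ≤ (1 - ε) * ((m:ℝ) * p)} ∪ {ω | (1 + ε) * ((m:ℝ) * p) ≤ T ω}) :=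
            measure_mono hcompl
        _ ≤ μ {ω | T ω ≤ (1 - ε) * ((m:ℝ) * p)} + μ {ω | (1 + ε) * ((m:ℝ) * p) ≤ T ω} :=
            measure_union_le _ _
        _ ≤ ENNReal.ofReal (δ / 2) + ENNReal.ofReal (δ / 2) := by
            gcongr
            · rw [← ENNReal.ofReal_toReal (measure_ne_top μ _)]
              exact ENNReal.ofReal_le_ofReal hlo
            · rw [← ENNReal.ofReal_toReal (measure_ne_top μ _)]
              exact ENNReal.ofReal_le_ofReal hup
        _ = ENNReal.ofReal δ := by
            rw [← ENNReal.ofReal_add (by positivity) (by positivity)]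
            norm_num
    have hfinal : ENNReal.ofReal (1 - δ) ≤ μ E := by
      have h1 : (1:ℝ≥0∞) ≤ μ E + ENNReal.ofReal δ := by
        calc (1:ℝ≥0∞) = μ Set.univ := measure_univ.symm
          _ = μ E + μ Eᶜ := (measure_add_measure_compl hEmeas).symm
          _ ≤ μ E + ENNReal.ofReal δ := by gcongr
      calc ENNReal.ofReal (1 - δ) = 1 - ENNReal.ofReal δ := by
            rw [ENNReal.ofReal_sub _ hδ.le, ENNReal.ofReal_one]
        _ ≤ μ E := tsub_le_iff_right.2 h1
    rw [ge_iff_le]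
    calc ENNReal.ofReal (1 - δ) ≤ μ E := hfinal
      _ = μ {ω | (1 - ε) * (S.card : ℝ) ≤ (2 ^ q : ℝ) * (T ω / m) ∧
            (2 ^ q : ℝ) * (T ω / m) ≤ (1 + ε) * (S.card : ℝ)} := by rw [hsetE]
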